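/- Under the structured RIP hypothesis, for any block-index sets Ω₁, Ω₂ with Ω₁ ∩ Ω₂ = ∅, |Ω₁|+|Ω₂| ≤ P, and unit-Frobenius-norm matrices D' supported on Ω₁ and D supported on Ω₂: −δ_{|Ω₁|+|Ω₂|} ≤ Re⟨Ψ_{Ω₁}D'_{Ω₁}, Ψ_{Ω₂}D_{Ω₂}⟩ ≤ δ_{|Ω₁|+|Ω₂|}. -/

import Mathlib

open scoped BigOperators
open Matrix
noncomputable section

variable {Np M L R : ℕ}

/-- Frobenius norm of a complex matrix. -/
def frob {m n : Type*} [Fintype m] [Fintype n] (A : Matrix m n ℂ) : ℝ :=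
  Real.sqrt (∑ i, ∑ j, ‖A i j‖ ^ 2)

/-- `D` is block-supported on the block-index set `Ω`. -/
def SuppOn (Ω : Finset (Fin L)) (D : Matrix (Fin L × Fin M) (Fin R) ℂ) : Prop :=
  ∀ p r, p.1 ∉ Ω → D p r = 0

/-- Column-block submatrix `Ψ_Ω` of `Ψ`. -/
def bsub (Ψ : Matrix (Fin Np) (Fin L × Fin M) ℂ) (Ω : Finset (Fin L)) :
    Matrix (Fin Np) ({l // l ∈ Ω} × Fin M) ℂ :=
  Ψ.submatrix id (fun q => ((q.1 : Fin L), q.2))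

/-- Row-block submatrix `D_Ω` of `D`. -/
def rsub (D : Matrix (Fin L × Fin M) (Fin R) ℂ) (Ω : Finset (Fin L)) :
    Matrix ({l // l ∈ Ω} × Fin M) (Fin R) ℂ :=
  D.submatrix (fun q => ((q.1 : Fin L), q.2)) id

/-- Moore–Penrose pseudoinverse `Ψ_Ω^† = (Ψ_Ωᴴ Ψ_Ω)⁻¹ Ψ_Ωᴴ` of the column-block submatrix. -/
def bpinv (Ψ : Matrix (Fin Np) (Fin L × Fin M) ℂ) (Ω : Finset (Fin L)) :
    Matrix ({l // l ∈ Ω} × Fin M) (Fin Np) ℂ :=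
  ((bsub Ψ Ω)ᴴ * bsub Ψ Ω)⁻¹ * (bsub Ψ Ω)ᴴ

/-- Re-embed a matrix indexed by the blocks of `Ω` as a full `ML × R` matrix, zero outside `Ω`. -/
def expand (Ω : Finset (Fin L)) (X : Matrix ({l // l ∈ Ω} × Fin M) (Fin R) ℂ) :
    Matrix (Fin L × Fin M) (Fin R) ℂ :=
  fun p r => if h : p.1 ∈ Ω then X (⟨p.1, h⟩, p.2) r else 0

/-- Structured (block) RIP of order `P` with constant `δ`. -/
def SRIP (Ψ : Matrix (Fin Np) (Fin L × Fin M) ℂ) (P : ℕ) (δ : ℝ) : Prop :=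
  ∀ Ω : Finset (Fin L), Ω.card ≤ P →
    ∀ D : Matrix (Fin L × Fin M) (Fin R) ℂ, SuppOn Ω D →
      (1 - δ) * frob D ^ 2 ≤ frob (Ψ * D) ^ 2 ∧ frob (Ψ * D) ^ 2 ≤ (1 + δ) * frob D ^ 2

/-!
Polarization: `4 Re⟨ΨD', ΨD⟩ = ‖Ψ(D' + D)‖² − ‖Ψ(D' − D)‖²`. Both `D' ± D` are supported on
`Ω₁ ∪ Ω₂`, and since disjoint supports make `D'` and `D` orthogonal, `‖D' ± D‖² = 2`; the RIP of
order `|Ω₁| + |Ω₂|` then pins both squared norms to `[2(1 − δ), 2(1 + δ)]`.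
-/

section Frobenius

variable {m n : Type*} [Fintype m] [Fintype n]

lemma frob_sq (A : Matrix m n ℂ) : frob A ^ 2 = ∑ i, ∑ j, Complex.normSq (A i j) := by
  rw [frob, Real.sq_sqrt (by positivity)]
  simp only [Complex.sq_norm]

lemma re_trace_conjTranspose_mul (A B : Matrix m n ℂ) :
    (Aᴴ * B).trace.re = ∑ i, ∑ j, (A i j * starRingEnd ℂ (B i j)).re := by
  simp only [Matrix.trace, Matrix.diag, Matrix.mul_apply, Matrix.conjTranspose_apply,
    Complex.re_sum]
  rw [Finset.sum_comm]
  refine Finset.sum_congr rfl fun i _ => Finset.sum_congr rfl fun j _ => ?_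
  simp only [RCLike.star_def, Complex.mul_re, Complex.conj_re, Complex.conj_im]
  ring

lemma frob_add_sq (A B : Matrix m n ℂ) :
    frob (A + B) ^ 2 = frob A ^ 2 + frob B ^ 2 + 2 * (Aᴴ * B).trace.re := by
  simp only [frob_sq, re_trace_conjTranspose_mul, Matrix.add_apply, Complex.normSq_add,
    Finset.sum_add_distrib, Finset.mul_sum]

lemma frob_sub_sq (A B : Matrix m n ℂ) :
    frob (A - B) ^ 2 = frob A ^ 2 + frob B ^ 2 - 2 * (Aᴴ * B).trace.re := by
  simp only [frob_sq, re_trace_conjTranspose_mul, Matrix.sub_apply, Complex.normSq_sub,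
    Finset.sum_add_distrib, Finset.sum_sub_distrib, Finset.mul_sum]

end Frobenius

section BlockSupport

variable {Ω Ω' : Finset (Fin L)} {D D' : Matrix (Fin L × Fin M) (Fin R) ℂ}

lemma SuppOn.mono (hD : SuppOn Ω D) (h : Ω ⊆ Ω') : SuppOn Ω' D :=
  fun p r hp => hD p r fun hpΩ => hp (h hpΩ)

lemma SuppOn.add (hD' : SuppOn Ω D') (hD : SuppOn Ω D) : SuppOn Ω (D' + D) := by
  intro p r hp
  simp [hD' p r hp, hD p r hp]

lemma SuppOn.sub (hD' : SuppOn Ω D') (hD : SuppOn Ω D) : SuppOn Ω (D' - D) := by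
  intro p r hp
  simp [hD' p r hp, hD p r hp]

lemma SuppOn.conjTranspose_mul_eq_zero (hD' : SuppOn Ω D') (hD : SuppOn Ω' D)
    (hdisj : Disjoint Ω Ω') : D'ᴴ * D = 0 := by
  ext r r'
  rw [Matrix.mul_apply]
  refine Finset.sum_eq_zero fun p _ => ?_
  rw [Matrix.conjTranspose_apply]
  by_cases hp : p.1 ∈ Ω
  · rw [hD p r' (Finset.disjoint_left.mp hdisj hp), mul_zero]
  · simp [hD' p r hp]

lemma bsub_mul_rsub (Ψ : Matrix (Fin Np) (Fin L × Fin M) ℂ) (hD : SuppOn Ω D) :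
    bsub Ψ Ω * rsub D Ω = Ψ * D := by
  ext i r
  simp only [Matrix.mul_apply, Fintype.sum_prod_type, bsub, rsub, Matrix.submatrix_apply, id]
  rw [Finset.sum_coe_sort Ω (fun l => ∑ j, Ψ i (l, j) * D (l, j) r)]
  refine Finset.sum_subset (Finset.subset_univ Ω) fun l _ hl => ?_
  exact Finset.sum_eq_zero fun j _ => by rw [hD (l, j) r hl, mul_zero]

lemma SRIP.abs_re_trace_le {k : ℕ} {δ : ℝ} {Ψ : Matrix (Fin Np) (Fin L × Fin M) ℂ}
    (hRIP : SRIP (R := R) Ψ k δ) (hΩ : Ω.card ≤ k) (hD' : SuppOn Ω D') (hD : SuppOn Ω D)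
    (horth : D'ᴴ * D = 0) (hD'norm : frob D' = 1) (hDnorm : frob D = 1) :
    |((Ψ * D')ᴴ * (Ψ * D)).trace.re| ≤ δ := by
  have hadd : frob (D' + D) ^ 2 = 2 := by
    rw [frob_add_sq, horth, hD'norm, hDnorm]; norm_num
  have hsub : frob (D' - D) ^ 2 = 2 := by
    rw [frob_sub_sq, horth, hD'norm, hDnorm]; norm_num
  have hplus := hRIP Ω hΩ _ (hD'.add hD)
  have hminus := hRIP Ω hΩ _ (hD'.sub hD)
  rw [hadd, Matrix.mul_add, frob_add_sq] at hplus
  rw [hsub, Matrix.mul_sub, frob_sub_sq] at hminus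
  rw [abs_le]
  constructor <;> linarith [hplus.1, hplus.2, hminus.1, hminus.2]

end BlockSupport

theorem srip_inner_product_bound_general
    (Ψ : Matrix (Fin Np) (Fin L × Fin M) ℂ) (δ : ℕ → ℝ)
    (hRIP : ∀ k, SRIP (R := R) Ψ k (δ k))
    (Ω₁ Ω₂ : Finset (Fin L)) (hdisj : Disjoint Ω₁ Ω₂)
    (D' D : Matrix (Fin L × Fin M) (Fin R) ℂ)
    (hD' : SuppOn Ω₁ D') (hD : SuppOn Ω₂ D)
    (hD'norm : frob D' = 1) (hDnorm : frob D = 1) :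
    -δ (Ω₁.card + Ω₂.card) ≤
        (((bsub Ψ Ω₁ * rsub D' Ω₁)ᴴ * (bsub Ψ Ω₂ * rsub D Ω₂)).trace).re ∧
      (((bsub Ψ Ω₁ * rsub D' Ω₁)ᴴ * (bsub Ψ Ω₂ * rsub D Ω₂)).trace).re ≤
        δ (Ω₁.card + Ω₂.card) := by
  rw [bsub_mul_rsub Ψ hD', bsub_mul_rsub Ψ hD, ← abs_le]
  exact (hRIP _).abs_re_trace_le (Finset.card_union_of_disjoint hdisj).le
    (hD'.mono Finset.subset_union_left) (hD.mono Finset.subset_union_right)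
    (hD'.conjTranspose_mul_eq_zero hD hdisj) hD'norm hDnorm

/-- `−δ_{|Ω₁|+|Ω₂|} ≤ Re⟨Ψ_{Ω₁}D'_{Ω₁}, Ψ_{Ω₂}D_{Ω₂}⟩ ≤ δ_{|Ω₁|+|Ω₂|}`
for unit-Frobenius-norm `D'`, `D` supported on disjoint block sets. -/
theorem srip_inner_product_bound
    (Ψ : Matrix (Fin Np) (Fin L × Fin M) ℂ) (P : ℕ) (δ : ℕ → ℝ)
    (hRIP : ∀ k, SRIP (R := R) Ψ k (δ k))
    (Ω₁ Ω₂ : Finset (Fin L)) (hdisj : Disjoint Ω₁ Ω₂)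
    (hcard : Ω₁.card + Ω₂.card ≤ P)
    (D' D : Matrix (Fin L × Fin M) (Fin R) ℂ)
    (hD' : SuppOn Ω₁ D') (hD : SuppOn Ω₂ D)
    (hD'norm : frob D' = 1) (hDnorm : frob D = 1) :
    -δ (Ω₁.card + Ω₂.card) ≤
        (((bsub Ψ Ω₁ * rsub D' Ω₁)ᴴ * (bsub Ψ Ω₂ * rsub D Ω₂)).trace).re ∧
      (((bsub Ψ Ω₁ * rsub D' Ω₁)ᴴ * (bsub Ψ Ω₂ * rsub D Ω₂)).trace).re ≤
        δ (Ω₁.card + Ω₂.card) :=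
  srip_inner_product_bound_general Ψ δ hRIP Ω₁ Ω₂ hdisj D' D hD' hD hD'norm hDnorm
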